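/- The group with presentation ⟨x, y | x⁻¹y²x = y³, x = y x y x⁻¹⟩ is trivial. -/

import Mathlib

/-!
Conjugation by `a` sends `b ^ 2` to `b ^ 3`, hence `b ^ 4` to `b ^ 6` and, applied twice, to `b ^ 9`.
Conjugating by `a ^ 2 = b * a * b` instead gives `b⁻¹ * b ^ 6 * b = b ^ 6`, so `b ^ 3 = 1`. Then
`b ^ 2` is conjugate to `1`, so `b = 1`, and `a * a = a` forces `a = 1`. Since the presented group is
generated by the images of `x` and `y`, it is trivial.
-/

section

variable {G : Type*} [Group G] {a b : G}

theorem inv_mul_pow_two_mul_mul_eq_pow_three_mul (h : a⁻¹ * b ^ 2 * a = b ^ 3) (n : ℕ) :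
    a⁻¹ * b ^ (2 * n) * a = b ^ (3 * n) := by
  have hconj := conj_pow (a := a⁻¹) (b := b ^ 2) (i := n)
  rw [inv_inv] at hconj
  rw [pow_mul, pow_mul, ← h, hconj]

theorem pow_three_eq_one_of_relations (h₁ : a⁻¹ * b ^ 2 * a = b ^ 3) (h₂ : a = b * a * b * a⁻¹) :
    b ^ 3 = 1 := by
  have h₄ : a⁻¹ * b ^ 4 * a = b ^ 6 := inv_mul_pow_two_mul_mul_eq_pow_three_mul h₁ 2
  have h₆ : a⁻¹ * b ^ 6 * a = b ^ 9 := inv_mul_pow_two_mul_mul_eq_pow_three_mul h₁ 3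
  have h₉ : b ^ 6 * b ^ 3 = b ^ 6 := calc
    b ^ 6 * b ^ 3 = (a * a)⁻¹ * b ^ 4 * (a * a) := by rw [← pow_add, ← h₆, ← h₄]; group
    _ = b⁻¹ * (a⁻¹ * b ^ 4 * a) * b := by rw [eq_mul_inv_iff_mul_eq.mp h₂]; group
    _ = b ^ 6 := by rw [h₄]; group
  exact mul_eq_left.mp h₉

theorem eq_one_of_relations (h₁ : a⁻¹ * b ^ 2 * a = b ^ 3) (h₂ : a = b * a * b * a⁻¹) :
    a = 1 ∧ b = 1 := by
  have hb₃ := pow_three_eq_one_of_relations h₁ h₂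
  have hb₂ : b ^ 2 = 1 := by
    rw [hb₃, mul_assoc, inv_mul_eq_one, eq_comm, mul_eq_right] at h₁
    exact h₁
  have hb : b = 1 := by
    calc b = b ^ 3 * (b ^ 2)⁻¹ := by group
      _ = 1 := by rw [hb₃, hb₂, one_mul, inv_one]
  rw [hb, one_mul, mul_one, mul_inv_cancel] at h₂
  exact ⟨h₂, hb⟩

end

theorem PresentedGroup.eq_one_of_forall_of_eq_one {α : Type*} {rels : Set (FreeGroup α)}
    (h : ∀ i, (PresentedGroup.of i : PresentedGroup rels) = 1) (g : PresentedGroup rels) :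
    g = 1 :=
  DFunLike.congr_fun (PresentedGroup.ext (φ := MonoidHom.id _) (ψ := 1) h) g

theorem stmt_1
    (x y : FreeGroup (Fin 2)) (hx : x = FreeGroup.of 0) (hy : y = FreeGroup.of 1) :
    ∀ g : PresentedGroup ({x⁻¹ * y ^ 2 * x * (y ^ 3)⁻¹, x * (y * x * y * x⁻¹)⁻¹} :
      Set (FreeGroup (Fin 2))), g = 1 := by
  subst hx hy
  refine PresentedGroup.eq_one_of_forall_of_eq_one (Fin.forall_fin_two.mpr ?_)
  exact eq_one_of_relations
    (mul_inv_eq_one.mp (PresentedGroup.one_of_mem (Set.mem_insert _ _)))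
    (mul_inv_eq_one.mp (PresentedGroup.one_of_mem (Set.mem_insert_of_mem _ rfl)))
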